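/- Let D be a (v,k,λ)-design. Then D is neat if and only if γ(G_D) = i(G_D), where i(G_D) is the independent domination number of the incidence graph. -/

import Mathlib

open Finset

variable {α ι : Type*}

/-- The incidence (Levi) graph of the block family `B` indexed by `ι` over point set `α`:
a bipartite graph where point `p` is adjacent to block `i` iff `p ∈ B i`. -/
def incGraph (B : ι → Finset α) : SimpleGraph (α ⊕ ι) where
  Adj x y :=
    (∃ p i, x = Sum.inl p ∧ y = Sum.inr i ∧ p ∈ B i) ∨
    (∃ p i, x = Sum.inr i ∧ y = Sum.inl p ∧ p ∈ B i)
  symm := by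
    constructor
    rintro x y (⟨p, i, rfl, rfl, h⟩ | ⟨p, i, rfl, rfl, h⟩)
    · exact Or.inr ⟨p, i, rfl, rfl, h⟩
    · exact Or.inl ⟨p, i, rfl, rfl, h⟩
  loopless := by
    constructor
    rintro x (⟨p, i, rfl, h, -⟩ | ⟨p, i, rfl, h, -⟩) <;> simp at h

/-- A dominating set of vertices in a graph: every vertex not in `S` has a neighbour in `S`. -/
def IsDomSet {V : Type*} (G : SimpleGraph V) (S : Finset V) : Prop :=
  ∀ v ∉ S, ∃ s ∈ S, G.Adj v s

/-- The domination number of a graph: the minimum size of a dominating set. -/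
noncomputable def domNum {V : Type*} (G : SimpleGraph V) : ℕ :=
  sInf {n | ∃ S : Finset V, IsDomSet G S ∧ S.card = n}

/-- The neat set `I_P` associated with a set of points `P`: the points of `P` together with
all blocks disjoint from `P`. -/
def neatSet [DecidableEq α] [DecidableEq ι] [Fintype ι] (B : ι → Finset α)
    (P : Finset α) : Finset (α ⊕ ι) :=
  P.image Sum.inl ∪ (Finset.univ.filter fun i => ∀ p ∈ P, p ∉ B i).image Sum.inr

/-- The independent domination number of a graph: the minimum size of a set of vertices that
is both independent and dominating. -/
noncomputable def indDomNum {V : Type*} (G : SimpleGraph V) : ℕ :=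
  sInf {n | ∃ S : Finset V, IsDomSet G S ∧ (∀ a ∈ S, ∀ b ∈ S, ¬ G.Adj a b) ∧ S.card = n}

/-!
A set `I_P` is always independent in `G_D`, since a block enters `I_P` only when it misses `P`.
Conversely an independent dominating set `S` equals `I_P` for `P` its set of points: a block
outside `S` is dominated by a point of `S`, and a block in `S` misses the points of `S`. So the
neat dominating sets are exactly the independent dominating sets, and `γ = i` says precisely that
one of them has size `γ`. Both minima are attained (rather than being the junk `sInf ∅ = 0`)
because `I_X`, for `X` the whole point set, is independent and dominating.
-/

section IncidenceGraph

variable (B : ι → Finset α)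

@[simp]
lemma incGraph_adj_inl_inr (p : α) (i : ι) : (incGraph B).Adj (.inl p) (.inr i) ↔ p ∈ B i := by
  simp [incGraph]

@[simp]
lemma incGraph_adj_inr_inl (p : α) (i : ι) : (incGraph B).Adj (.inr i) (.inl p) ↔ p ∈ B i := by
  simp [incGraph]

@[simp]
lemma not_incGraph_adj_inl_inl (p q : α) : ¬ (incGraph B).Adj (.inl p) (.inl q) := by
  simp [incGraph]

@[simp]
lemma not_incGraph_adj_inr_inr (i j : ι) : ¬ (incGraph B).Adj (.inr i) (.inr j) := by
  simp [incGraph]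

variable [DecidableEq α] [DecidableEq ι] [Fintype ι]

@[simp]
lemma inl_mem_neatSet (P : Finset α) (p : α) : .inl p ∈ neatSet B P ↔ p ∈ P := by
  simp [neatSet]

@[simp]
lemma inr_mem_neatSet (P : Finset α) (i : ι) : .inr i ∈ neatSet B P ↔ ∀ p ∈ P, p ∉ B i := by
  simp [neatSet]

lemma neatSet_indep (P : Finset α) :
    ∀ a ∈ neatSet B P, ∀ b ∈ neatSet B P, ¬ (incGraph B).Adj a b := by
  rintro (p | i) ha (q | j) hb <;> simp only [inl_mem_neatSet, inr_mem_neatSet] at ha hb <;> simp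
  · exact fun hp => hb p ha hp
  · exact fun hq => ha q hb hq

lemma isDomSet_neatSet_univ [Fintype α] : IsDomSet (incGraph B) (neatSet B univ) := by
  rintro (p | i) hx
  · simp at hx
  · obtain ⟨p, hp⟩ : ∃ p, p ∈ B i := by simpa using hx
    exact ⟨.inl p, by simp, by simpa⟩

lemma neatSet_toLeft_eq {S : Finset (α ⊕ ι)} (hdom : IsDomSet (incGraph B) S)
    (hind : ∀ a ∈ S, ∀ b ∈ S, ¬ (incGraph B).Adj a b) : neatSet B S.toLeft = S := by
  ext (p | i)
  · simp
  · rw [inr_mem_neatSet]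
    constructor
    · intro hmiss
      by_contra hi
      obtain ⟨(p | j), hpS, hadj⟩ := hdom _ hi
      · exact hmiss p (mem_toLeft.2 hpS) ((incGraph_adj_inr_inl B p i).1 hadj)
      · exact not_incGraph_adj_inr_inr B i j hadj
    · intro hi p hp hpi
      exact hind _ hi _ (mem_toLeft.1 hp) ((incGraph_adj_inr_inl B p i).2 hpi)

end IncidenceGraph

lemma exists_indDom_card_eq_indDomNum {V : Type*} {G : SimpleGraph V} {T : Finset V}
    (hdom : IsDomSet G T) (hind : ∀ a ∈ T, ∀ b ∈ T, ¬ G.Adj a b) :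
    ∃ S : Finset V, IsDomSet G S ∧ (∀ a ∈ S, ∀ b ∈ S, ¬ G.Adj a b) ∧ S.card = indDomNum G :=
  Nat.sInf_mem (s := {n | ∃ S : Finset V, IsDomSet G S ∧
    (∀ a ∈ S, ∀ b ∈ S, ¬ G.Adj a b) ∧ S.card = n}) ⟨T.card, T, hdom, hind, rfl⟩

lemma domNum_le_indDomNum {V : Type*} {G : SimpleGraph V} {T : Finset V}
    (hdom : IsDomSet G T) (hind : ∀ a ∈ T, ∀ b ∈ T, ¬ G.Adj a b) : domNum G ≤ indDomNum G := by
  obtain ⟨S, hSdom, -, hS⟩ := exists_indDom_card_eq_indDomNum hdom hind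
  exact Nat.sInf_le ⟨S, hSdom, hS⟩

theorem stmt12_general [Fintype α] [Fintype ι] [DecidableEq α] [DecidableEq ι]
    (B : ι → Finset α) :
    (∃ P : Finset α, IsDomSet (incGraph B) (neatSet B P) ∧
        (neatSet B P).card = domNum (incGraph B))
      ↔ domNum (incGraph B) = indDomNum (incGraph B) := by
  have hγi := domNum_le_indDomNum (isDomSet_neatSet_univ B) (neatSet_indep B univ)
  constructor
  · rintro ⟨P, hdom, hcard⟩
    refine le_antisymm hγi ?_
    rw [← hcard]
    exact Nat.sInf_le ⟨neatSet B P, hdom, neatSet_indep B P, rfl⟩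
  · intro heq
    obtain ⟨S, hdom, hind, hcard⟩ :=
      exists_indDom_card_eq_indDomNum (isDomSet_neatSet_univ B) (neatSet_indep B univ)
    have hS := neatSet_toLeft_eq B hdom hind
    rw [← hS] at hdom hcard
    exact ⟨S.toLeft, hdom, hcard.trans heq.symm⟩

/-- A `(v,k,λ)`-design `D` is neat (it has a dominating set of the form
`I_P` of cardinality `γ(D)`) if and only if `γ(G_D) = i(G_D)`, where `i` is the
independent domination number. -/
theorem stmt12 [Fintype α] [Fintype ι] [DecidableEq α] [DecidableEq ι]
    (B : ι → Finset α) (v k l : ℕ)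
    (hv : Fintype.card α = v)
    (hk2 : 2 ≤ k) (hkv : k < v) (hl : 1 ≤ l)
    (hblock : ∀ i, (B i).card = k)
    (hpair : ∀ x y : α, x ≠ y →
      (Finset.univ.filter fun i => x ∈ B i ∧ y ∈ B i).card = l) :
    (∃ P : Finset α, IsDomSet (incGraph B) (neatSet B P) ∧
        (neatSet B P).card = domNum (incGraph B))
      ↔ domNum (incGraph B) = indDomNum (incGraph B) :=
  stmt12_general B
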